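/- arXiv:1502.01613 — 2 statements merged into one kernel-verified Lean document; each statement's English description precedes it below -/
import Mathlib

section
/- Let A ∈ ℂ^{n×n}, let μ(A) denote the logarithmic norm of A, i.e. the largest eigenvalue of (A + A*)/2 (equivalently the supremum of Re⟨x, Ax⟩ over unit vectors x), and for ℓ ≥ 1 let φ_ℓ(A) = Σ_{k=0}^∞ A^k/(k+ℓ)! (equivalently φ_ℓ(A) = ∫_0^1 e^{(1−τ)A} τ^{ℓ−1}/(ℓ−1)! dτ). Then ‖φ_ℓ(A)‖ ≤ max(1, e^{μ(A)}) / ℓ!. -/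
/-!
If `Re ⟪x, T x⟫ ≤ μ ‖x‖²`, the curve `z s = e^{-sμ} e^{sT} x` satisfies `Re ⟪z, z'⟫ ≤ 0`, so `‖z‖`
is non-increasing and `‖e^{tT}‖ ≤ e^{tμ} ≤ max 1 e^μ` for `t ∈ [0, 1]`. Expanding `e^{(1-s)T}` and
integrating termwise with the Beta integral `∫₀¹ s^m (1-s)^k = m! k! / (m+k+1)!` gives
`φ_{m+1}(T) = ∫₀¹ s^m / m! • e^{(1-s)T} ds`, whose norm is therefore at most
`max 1 e^μ * ∫₀¹ s^m / m! = max 1 e^μ / (m+1)!`; and `φ₀(T) = e^T`.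
-/

open scoped Matrix.Norms.L2Operator

/-- The matrix φ-function `φ_ℓ(A) = ∑_{k=0}^∞ A^k / (k+ℓ)!`, defined by its
norm-convergent power series. -/
noncomputable def phiM {n : ℕ} (l : ℕ) (A : Matrix (Fin n) (Fin n) ℂ) :
    Matrix (Fin n) (Fin n) ℂ :=
  ∑' k : ℕ, ((Nat.factorial (k + l) : ℂ))⁻¹ • A ^ k

open NormedSpace Nat MeasureTheory

theorem antitone_norm_of_inner_deriv_nonpos {F : Type*} [NormedAddCommGroup F]
    [InnerProductSpace ℝ F] {z z' : ℝ → F} (hz : ∀ s, HasDerivAt z (z' s) s)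
    (hinner : ∀ s, inner ℝ (z s) (z' s) ≤ 0) : Antitone fun s => ‖z s‖ := by
  have hsq : Antitone fun s => ‖z s‖ ^ 2 :=
    antitone_of_deriv_nonpos (fun s => (hz s).norm_sq.differentiableAt) fun s => by
      rw [(hz s).norm_sq.deriv]
      linarith [hinner s]
  exact fun a b hab => (sq_le_sq₀ (norm_nonneg _) (norm_nonneg _)).1 (hsq hab)

section Dissipative

variable {E : Type*} [NormedAddCommGroup E] [InnerProductSpace ℂ E] [CompleteSpace E]

theorem hasDerivAt_exp_smul_apply (T : E →L[ℂ] E) (x : E) (s : ℝ) :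
    HasDerivAt (fun u : ℝ => exp (u • T) x) (T (exp (s • T) x)) s :=
  ((ContinuousLinearMap.apply ℂ E x).restrictScalars ℝ).hasFDerivAt.comp_hasDerivAt s
    (hasDerivAt_exp_smul_const' T s)

theorem norm_exp_smul_apply_le (T : E →L[ℂ] E) {μ : ℝ}
    (h : ∀ x, (inner ℂ x (T x)).re ≤ μ * ‖x‖ ^ 2) {t : ℝ} (ht : 0 ≤ t) (x : E) :
    ‖exp (t • T) x‖ ≤ Real.exp (t * μ) * ‖x‖ := by
  let _ := InnerProductSpace.rclikeToReal ℂ E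
  set y : ℝ → E := fun s => exp (s • T) x
  have hz : ∀ s, HasDerivAt (fun u => Real.exp (-(u * μ)) • y u)
      (Real.exp (-(s * μ)) • (T (y s) - μ • y s)) s := fun s => by
    convert ((hasDerivAt_mul_const μ).fun_neg.exp).fun_smul (hasDerivAt_exp_smul_apply T x s)
      using 1
    rw [smul_sub, smul_smul, sub_eq_add_neg, ← neg_smul, mul_neg]
  have hinner : ∀ s, inner ℝ (Real.exp (-(s * μ)) • y s)
      (Real.exp (-(s * μ)) • (T (y s) - μ • y s)) ≤ 0 := fun s => by
    have hy := h (y s)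
    rw [← RCLike.re_to_complex, ← real_inner_eq_re_inner] at hy
    rw [real_inner_smul_left, real_inner_smul_right, inner_sub_right, real_inner_smul_right,
      real_inner_self_eq_norm_sq]
    exact mul_nonpos_of_nonneg_of_nonpos (Real.exp_nonneg _)
      (mul_nonpos_of_nonneg_of_nonpos (Real.exp_nonneg _) (by linarith))
  have hmono := antitone_norm_of_inner_deriv_nonpos hz hinner ht
  simp only [y, zero_smul, exp_zero, zero_mul, neg_zero, Real.exp_zero, one_smul,
    one_apply_eq_self, norm_smul, Real.norm_eq_abs, Real.abs_exp] at hmono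
  rwa [Real.exp_neg, inv_mul_le_iff₀ (Real.exp_pos _)] at hmono

theorem norm_exp_smul_le (T : E →L[ℂ] E) {μ : ℝ}
    (h : ∀ x, (inner ℂ x (T x)).re ≤ μ * ‖x‖ ^ 2) {t : ℝ} (ht : 0 ≤ t) :
    ‖exp (t • T)‖ ≤ Real.exp (t * μ) :=
  ContinuousLinearMap.opNorm_le_bound _ (Real.exp_nonneg _) (norm_exp_smul_apply_le T h ht)

end Dissipative

theorem integral_pow_mul_one_sub_pow (a b : ℕ) :
    ∫ s in (0 : ℝ)..1, s ^ a * (1 - s) ^ b = (a ! * b ! : ℝ) / (a + b + 1)! := by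
  have hbeta : Complex.betaIntegral (a + 1) (b + 1)
      = ((∫ s in (0 : ℝ)..1, s ^ a * (1 - s) ^ b : ℝ) : ℂ) := by
    rw [Complex.betaIntegral, ← intervalIntegral.integral_ofReal]
    refine intervalIntegral.integral_congr fun x _ => ?_
    simp only [add_sub_cancel_right, Complex.cpow_natCast]
    push_cast
    ring
  have hgamma := Complex.Gamma_mul_Gamma_eq_betaIntegral
    (s := (a : ℂ) + 1) (t := (b : ℂ) + 1) (by simp; positivity) (by simp; positivity)
  rw [show (a : ℂ) + 1 + (b + 1) = ((a + b + 1 : ℕ) : ℂ) + 1 by push_cast; ring,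
    Complex.Gamma_nat_eq_factorial, Complex.Gamma_nat_eq_factorial,
    Complex.Gamma_nat_eq_factorial, hbeta] at hgamma
  apply Complex.ofReal_injective
  push_cast
  rw [eq_div_iff (by exact_mod_cast (a + b + 1).factorial_ne_zero)]
  linear_combination -hgamma

section BanachAlgebra

variable {𝔸 : Type*} [NormedRing 𝔸] [NormedAlgebra ℝ 𝔸] [CompleteSpace 𝔸]

theorem hasSum_inv_factorial_add_smul_pow (a : 𝔸) (m : ℕ) :
    HasSum (fun k => ((k + (m + 1))! : ℝ)⁻¹ • a ^ k)
      (∫ s in (0 : ℝ)..1, (s ^ m / m ! : ℝ) • exp ((1 - s) • a)) := by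
  set F : ℕ → ℝ → 𝔸 := fun k s => (s ^ m * (1 - s) ^ k / m !) • ((k ! : ℝ)⁻¹ • a ^ k)
  have hintegral : ∀ k, ∫ s in (0 : ℝ)..1, F k s = ((k + (m + 1))! : ℝ)⁻¹ • a ^ k := fun k => by
    rw [intervalIntegral.integral_smul_const, intervalIntegral.integral_div,
      integral_pow_mul_one_sub_pow, smul_smul, show k + (m + 1) = m + k + 1 by ring]
    congr 1
    field_simp
  have hterm : ∀ s, HasSum (fun k => F k s) ((s ^ m / m ! : ℝ) • exp ((1 - s) • a)) := by
    intro s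
    convert (exp_series_hasSum_exp' (𝕂 := ℝ) ((1 - s) • a)).const_smul (s ^ m / m ! : ℝ)
      using 2 with k
    simp only [F, smul_pow, smul_smul]
    ring_nf
  have hbound : ∀ k, ∀ s ∈ Set.uIoc (0 : ℝ) 1, ‖F k s‖ ≤ ‖(k ! : ℝ)⁻¹ • a ^ k‖ := by
    intro k s hs
    rw [Set.uIoc_of_le zero_le_one] at hs
    have hs' : 0 ≤ 1 - s := sub_nonneg.2 hs.2
    have hnonneg : 0 ≤ s ^ m * (1 - s) ^ k / m ! := by
      have := hs.1.le
      positivity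
    have hcoeff : s ^ m * (1 - s) ^ k / m ! ≤ 1 :=
      div_le_one_of_le₀ ((mul_le_one₀ (pow_le_one₀ hs.1.le hs.2) (pow_nonneg hs' _)
        (pow_le_one₀ hs' (sub_le_self 1 hs.1.le))).trans (Nat.one_le_cast.2 m.factorial_pos))
        (by positivity)
    rw [norm_smul, Real.norm_of_nonneg hnonneg]
    exact mul_le_of_le_one_left (norm_nonneg _) hcoeff
  simp_rw [← hintegral]
  exact intervalIntegral.hasSum_integral_of_dominated_convergence
    (fun k _ => ‖(k ! : ℝ)⁻¹ • a ^ k‖) (fun k => by fun_prop) (fun k => ae_of_all _ (hbound k))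
    (ae_of_all _ fun _ _ => norm_expSeries_summable' a) intervalIntegrable_const
    (ae_of_all _ fun s _ => hterm s)

theorem integral_pow_div_factorial (m : ℕ) :
    ∫ s in (0 : ℝ)..1, s ^ m / m ! = ((m + 1)! : ℝ)⁻¹ := by
  rw [intervalIntegral.integral_div, integral_pow, Nat.factorial_succ]
  push_cast
  field_simp
  simp

theorem norm_tsum_inv_factorial_add_smul_pow_le (a : 𝔸) {C : ℝ}
    (h : ∀ t ∈ Set.Icc (0 : ℝ) 1, ‖exp (t • a)‖ ≤ C) (l : ℕ) :
    ‖∑' k, ((k + l)! : ℝ)⁻¹ • a ^ k‖ ≤ C / l ! := by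
  cases l with
  | zero =>
    simpa [(exp_series_hasSum_exp' (𝕂 := ℝ) a).tsum_eq] using h 1 (by simp)
  | succ m =>
    rw [(hasSum_inv_factorial_add_smul_pow a m).tsum_eq]
    calc ‖∫ s in (0 : ℝ)..1, (s ^ m / m ! : ℝ) • exp ((1 - s) • a)‖
        ≤ ∫ s in (0 : ℝ)..1, s ^ m / m ! * C := by
          refine intervalIntegral.norm_integral_le_of_norm_le zero_le_one
            (ae_of_all _ fun s hs => ?_) (Continuous.intervalIntegrable (by fun_prop) _ _)
          have hs0 : 0 ≤ s ^ m / m ! := by have := hs.1.le; positivity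
          rw [norm_smul, Real.norm_of_nonneg hs0]
          exact mul_le_mul_of_nonneg_left (h _ ⟨by linarith [hs.2], by linarith [hs.1]⟩) hs0
      _ = C / (m + 1)! := by
          rw [intervalIntegral.integral_mul_const, integral_pow_div_factorial, inv_mul_eq_div]

end BanachAlgebra

theorem re_inner_le_mul_norm_sq_of_mem_upperBounds {E : Type*} [NormedAddCommGroup E]
    [InnerProductSpace ℂ E] (T : E →ₗ[ℂ] E) {μ : ℝ}
    (hμ : μ ∈ upperBounds {r | ∃ x : E, ‖x‖ = 1 ∧ r = (inner ℂ x (T x)).re}) (x : E) :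
    (inner ℂ x (T x)).re ≤ μ * ‖x‖ ^ 2 := by
  rcases eq_or_ne x 0 with rfl | hx
  · simp
  have hx' : ‖x‖ ≠ 0 := norm_ne_zero_iff.2 hx
  have hunit := hμ ⟨((‖x‖⁻¹ : ℝ) : ℂ) • x, by simp [norm_smul, hx'], rfl⟩
  rw [map_smul, inner_smul_left, inner_smul_right, Complex.conj_ofReal, ← mul_assoc,
    ← Complex.ofReal_mul, Complex.re_ofReal_mul, ← sq, inv_pow] at hunit
  rwa [inv_mul_le_iff₀ (by positivity), mul_comm] at hunit

theorem norm_phiM_eq {n : ℕ} (l : ℕ) (A : Matrix (Fin n) (Fin n) ℂ) :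
    ‖phiM l A‖ = ‖∑' k, ((k + l)! : ℝ)⁻¹ • Matrix.toEuclideanCLM (𝕜 := ℂ) A ^ k‖ := by
  let e :=
    (Matrix.toEuclideanCLM (n := Fin n) (𝕜 := ℂ)).toAlgEquiv.toLinearEquiv.toContinuousLinearEquiv
  rw [Matrix.cstar_norm_def, phiM]
  change ‖e _‖ = _
  rw [e.map_tsum]
  refine congrArg _ (tsum_congr fun k => ?_)
  change Matrix.toEuclideanCLM (𝕜 := ℂ) (n := Fin n) _ = _
  rw [map_smul, map_pow, ← Complex.ofReal_natCast, ← Complex.ofReal_inv]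
  exact Complex.coe_smul _ (Matrix.toEuclideanCLM (𝕜 := ℂ) A ^ k)

theorem Real.exp_mul_le_max_one_exp {t : ℝ} (ht : t ∈ Set.Icc (0 : ℝ) 1) (μ : ℝ) :
    Real.exp (t * μ) ≤ max 1 (Real.exp μ) := by
  rw [← Real.exp_zero, ← Real.exp_monotone.map_max, Real.exp_le_exp]
  rcases le_total μ 0 with hμ | hμ
  · exact le_max_of_le_left (mul_nonpos_of_nonneg_of_nonpos ht.1 hμ)
  · exact le_max_of_le_right (mul_le_of_le_one_left hμ ht.2)

theorem phi_norm_bound_general (n : ℕ) (A : Matrix (Fin n) (Fin n) ℂ) (μ : ℝ)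
    (hμ : IsLUB {r : ℝ | ∃ x : EuclideanSpace ℂ (Fin n), ‖x‖ = 1 ∧
      r = (inner ℂ x (Matrix.toEuclideanLin A x) : ℂ).re} μ)
    (l : ℕ) :
    ‖phiM l A‖ ≤ max 1 (Real.exp μ) / (Nat.factorial l) := by
  set T := Matrix.toEuclideanCLM (𝕜 := ℂ) A
  have hT : ∀ x, (inner ℂ x (T x)).re ≤ μ * ‖x‖ ^ 2 :=
    re_inner_le_mul_norm_sq_of_mem_upperBounds (Matrix.toEuclideanLin A) hμ.1
  rw [norm_phiM_eq]
  refine norm_tsum_inv_factorial_add_smul_pow_le T (fun t ht => ?_) l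
  exact (norm_exp_smul_le T hT ht.1).trans (Real.exp_mul_le_max_one_exp ht μ)

/-- If `μ` is the logarithmic norm of `A` (the largest eigenvalue of `(A + A*)/2`, equivalently
the supremum of `Re ⟪x, A x⟫` over unit vectors `x`), then for `ℓ ≥ 1`,
`‖φ_ℓ(A)‖ ≤ max(1, e^μ) / ℓ!` in the spectral norm. -/
theorem phi_norm_bound (n : ℕ) (A : Matrix (Fin n) (Fin n) ℂ) (μ : ℝ)
    (hμ : IsLUB {r : ℝ | ∃ x : EuclideanSpace ℂ (Fin n), ‖x‖ = 1 ∧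
      r = (inner ℂ x (Matrix.toEuclideanLin A x) : ℂ).re} μ)
    (l : ℕ) (hl : 1 ≤ l) :
    ‖phiM l A‖ ≤ max 1 (Real.exp μ) / (Nat.factorial l) :=
  phi_norm_bound_general n A μ hμ l
end

section
/- Let N ≥ 1, t > 0, a > 0, c > 0, C > 0 and β ≥ 1. Let F ∈ ℂ^{N×N} satisfy ‖F^ℓ e_1‖ ≤ (1 + β^{−1} c ℓ) a^ℓ for 0 ≤ ℓ ≤ N−1, and ‖(tF)^N‖ ≤ (tC)^N. Let r_N(M) := Σ_{ℓ=N}^∞ M^ℓ/ℓ! be the N-th Taylor remainder of the matrix exponential. Then β ‖r_N(t F) e_1‖ ≤ (β + cN) e^{t a} Σ_{k=1}^∞ (tC)^{kN}/(kN)!. In particular, if a sequence of such matrices F_N satisfies these hypotheses with constants independent of N, then β ‖r_N(t F_N) e_1‖ → 0 as N → ∞. -/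
open scoped Matrix.Norms.L2Operator

/-- The first standard basis vector of `ℂ^N`. -/
noncomputable def e1C (N : ℕ) : Fin N → ℂ := fun j => if (j : ℕ) = 0 then 1 else 0

/-- The `N`-th Taylor remainder of the matrix exponential,
`r_N(M) = ∑_{ℓ=N}^∞ M^ℓ / ℓ!`, defined by its norm-convergent power series. -/
noncomputable def rM {d : ℕ} (N : ℕ) (M : Matrix (Fin d) (Fin d) ℂ) :
    Matrix (Fin d) (Fin d) ℂ :=
  ∑' k : ℕ, ((Nat.factorial (N + k) : ℂ))⁻¹ • M ^ (N + k)

/-- The Euclidean norm of a vector in `ℂ^n`. -/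
noncomputable def cnorm {n : ℕ} (v : Fin n → ℂ) : ℝ :=
  ‖(WithLp.equiv 2 (Fin n → ℂ)).symm v‖

/-!
Split each exponent `n ≥ N` as `n = qN + r` with `q ≥ 1` and `r < N`. Then
`M^n e₁ = (M^N)^q (M^r e₁)` and `(qN)! r! ≤ n!`, so the remainder series `r_N(M) e₁` is
dominated termwise by the product of `∑_{q ≥ 1} x^{qN}/(qN)!` (where `‖M^N‖ ≤ x^N`) with
`∑_{r < N} ‖M^r e₁‖/r!`; for `M = tF` the latter is at most `(1 + β⁻¹cN) e^{ta}`.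
The first factor is at most `|x|^N/N! · e^{|x|}`, and `(β + cN) |x|^N/N! → 0`.
-/

open Finset Filter Topology
open scoped Nat Matrix

lemma cnorm_nonneg {n : ℕ} (v : Fin n → ℂ) : 0 ≤ cnorm v := norm_nonneg _

lemma cnorm_smul {n : ℕ} (s : ℂ) (v : Fin n → ℂ) : cnorm (s • v) = ‖s‖ * cnorm v :=
  norm_smul s ((WithLp.equiv 2 (Fin n → ℂ)).symm v)

lemma cnorm_mulVec_le {m n : ℕ} (A : Matrix (Fin m) (Fin n) ℂ) (v : Fin n → ℂ) :
    cnorm (A *ᵥ v) ≤ ‖A‖ * cnorm v :=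
  A.l2_opNorm_mulVec _

lemma cnorm_pow_mulVec_le {n : ℕ} {A : Matrix (Fin n) (Fin n) ℂ} {B : ℝ} (hA : ‖A‖ ≤ B)
    (v : Fin n → ℂ) (q : ℕ) : cnorm (A ^ q *ᵥ v) ≤ B ^ q * cnorm v := by
  induction q with
  | zero => simp
  | succ q ih =>
    rw [pow_succ', ← Matrix.mulVec_mulVec, pow_succ', mul_assoc]
    exact (cnorm_mulVec_le _ _).trans
      (mul_le_mul hA ih (cnorm_nonneg _) ((norm_nonneg _).trans hA))

lemma HasSum.cnorm_mulVec_le {ι : Type*} {m n : ℕ} {f : ι → Matrix (Fin m) (Fin n) ℂ}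
    {A : Matrix (Fin m) (Fin n) ℂ} (hf : HasSum f A) (v : Fin n → ℂ) {g : ι → ℝ} {s : ℝ}
    (hg : HasSum g s) (hfg : ∀ i, cnorm (f i *ᵥ v) ≤ g i) : cnorm (A *ᵥ v) ≤ s := by
  have hfv : HasSum (fun i => f i *ᵥ v) (A *ᵥ v) :=
    hf.map (Matrix.mulVec.addMonoidHomLeft v) (continuous_id.matrix_mulVec continuous_const)
  exact (hfv.map (EuclideanSpace.equiv (Fin m) ℂ).symm
    (EuclideanSpace.equiv (Fin m) ℂ).symm.continuous).norm_le_of_bounded hg hfg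

lemma hasSum_rM {d : ℕ} (N : ℕ) (M : Matrix (Fin d) (Fin d) ℂ) :
    HasSum (fun k => ((N + k)! : ℂ)⁻¹ • M ^ (N + k)) (rM N M) := by
  have h := (summable_nat_add_iff N).2 (NormedSpace.expSeries_summable' (𝕂 := ℂ) M)
  simp_rw [add_comm _ N] at h
  exact h.hasSum

lemma hasSum_mul_div_mod {N : ℕ} (hN : N ≠ 0) {u : ℕ → ℝ} (hu : Summable u) (v : ℕ → ℝ) :
    HasSum (fun k => u (k / N) * v (k % N)) ((∑' q, u q) * ∑ r ∈ range N, v r) := by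
  have : NeZero N := ⟨hN⟩
  have hv : HasSum (fun r : Fin N => v r) (∑ r ∈ range N, v r) := by
    rw [← Fin.sum_univ_eq_sum_range]
    exact hasSum_fintype _
  have huv : HasSum (fun p : ℕ × Fin N => u p.1 * v p.2) _ := hu.hasSum.mul hv
    (summable_mul_of_summable_norm (g := fun r : Fin N => v r) hu.norm Summable.of_finite)
  rw [← (Nat.divModEquiv N).hasSum_iff] at huv
  convert huv using 2 with k
  simp [Nat.divModEquiv]

lemma mul_div_factorial_add_le {a b : ℝ} (ha : 0 ≤ a) (hb : 0 ≤ b) (m n : ℕ) :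
    a * b / (m + n)! ≤ a / m ! * (b / n !) := by
  rw [div_mul_div_comm]
  refine div_le_div_of_nonneg_left (mul_nonneg ha hb) (by positivity) ?_
  exact_mod_cast
    Nat.le_of_dvd (Nat.factorial_pos _) (Nat.factorial_mul_factorial_dvd_factorial_add m n)

lemma summable_pow_mul_div_factorial (x : ℝ) {N : ℕ} (hN : N ≠ 0) :
    Summable fun q : ℕ => x ^ (q * N) / (q * N)! :=
  (Real.summable_pow_div_factorial x).comp_injective (mul_left_injective₀ hN)

theorem cnorm_rM_mulVec_le {d N : ℕ} (hN : N ≠ 0) (M : Matrix (Fin d) (Fin d) ℂ)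
    (v : Fin d → ℂ) {x : ℝ} (hM : ‖M ^ N‖ ≤ x ^ N) (w : ℕ → ℝ)
    (hw : ∀ r < N, cnorm (M ^ r *ᵥ v) ≤ w r) :
    cnorm (rM N M *ᵥ v) ≤
      (∑' q : ℕ, x ^ ((q + 1) * N) / ((q + 1) * N)!) * ∑ r ∈ range N, w r / r ! := by
  have hxN : 0 ≤ x ^ N := (norm_nonneg _).trans hM
  have hu : Summable fun q : ℕ => x ^ ((q + 1) * N) / ((q + 1) * N)! :=
    (summable_nat_add_iff 1).2 (summable_pow_mul_div_factorial x hN)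
  refine HasSum.cnorm_mulVec_le (hasSum_rM N M) v (hasSum_mul_div_mod hN hu _) fun k => ?_
  have hr : k % N < N := Nat.mod_lt k (Nat.pos_of_ne_zero hN)
  have hk : N + k = (k / N + 1) * N + k % N := by
    rw [add_one_mul, add_comm _ N, add_assoc, mul_comm, Nat.div_add_mod]
  have hwr : 0 ≤ w (k % N) := (cnorm_nonneg _).trans (hw _ hr)
  rw [Matrix.smul_mulVec, cnorm_smul, norm_inv, Complex.norm_natCast, hk, pow_add, pow_mul',
    ← Matrix.mulVec_mulVec, ← div_eq_inv_mul]
  calc cnorm ((M ^ N) ^ (k / N + 1) *ᵥ (M ^ (k % N) *ᵥ v)) / ((k / N + 1) * N + k % N)!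
      ≤ (x ^ N) ^ (k / N + 1) * w (k % N) / ((k / N + 1) * N + k % N)! := by
        gcongr
        exact (cnorm_pow_mulVec_le hM _ _).trans (by gcongr; exact hw _ hr)
    _ ≤ _ := by
        rw [← pow_mul']
        exact mul_div_factorial_add_le (by rw [pow_mul']; positivity) hwr _ _

lemma tsum_pow_mul_div_factorial_le (x : ℝ) {N : ℕ} (hN : N ≠ 0) :
    ∑' q : ℕ, x ^ ((q + 1) * N) / ((q + 1) * N)! ≤ |x| ^ N / N ! * Real.exp |x| := by
  have hs := summable_pow_mul_div_factorial |x| hN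
  calc ∑' q : ℕ, x ^ ((q + 1) * N) / ((q + 1) * N)!
      ≤ ∑' q : ℕ, |x| ^ (q * N) / (q * N)! * (|x| ^ N / N !) := by
        refine Summable.tsum_le_tsum (fun q => ?_)
          ((summable_nat_add_iff 1).2 (summable_pow_mul_div_factorial x hN)) (hs.mul_right _)
        rw [add_one_mul]
        calc x ^ (q * N + N) / (q * N + N)! ≤ |x| ^ (q * N + N) / (q * N + N)! := by
              gcongr ?_ / _
              exact (le_abs_self _).trans (abs_pow x _).le
          _ = |x| ^ (q * N) * |x| ^ N / (q * N + N)! := by rw [pow_add]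
          _ ≤ _ := mul_div_factorial_add_le (by positivity) (by positivity) _ _
    _ = (∑' q : ℕ, |x| ^ (q * N) / (q * N)!) * (|x| ^ N / N !) := tsum_mul_right
    _ ≤ Real.exp |x| * (|x| ^ N / N !) := by
        gcongr
        rw [Real.exp_eq_exp_ℝ, NormedSpace.exp_eq_tsum_div]
        exact hs.tsum_le_tsum_of_inj _ (mul_left_injective₀ hN) (fun _ _ => by positivity)
          (fun _ => le_rfl) (Real.summable_pow_div_factorial |x|)
    _ = _ := mul_comm _ _

lemma tendsto_linear_mul_pow_div_factorial (β c x : ℝ) :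
    Tendsto (fun n : ℕ => (β + c * n) * (x ^ n / n !)) atTop (𝓝 0) := by
  have h₀ := FloorSemiring.tendsto_pow_div_factorial_atTop x
  have h₁ : Tendsto (fun n : ℕ => n * (x ^ n / n !)) atTop (𝓝 0) := by
    rw [← tendsto_add_atTop_iff_nat 1]
    convert h₀.const_mul x using 2 with n
    · rw [Nat.factorial_succ, pow_succ]
      push_cast
      field_simp
    · simp
  simpa [add_mul, mul_assoc] using (h₀.const_mul β).add (h₁.const_mul c)

theorem mul_cnorm_rM_smul_mulVec_le {t a c β x : ℝ}
    (ht : 0 ≤ t) (ha : 0 ≤ a) (hc : 0 ≤ c) (hβ : 0 < β)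
    {N : ℕ} (hN : N ≠ 0) (F : Matrix (Fin N) (Fin N) ℂ)
    (hF1 : ∀ l : ℕ, l ≤ N - 1 →
      cnorm (F ^ l *ᵥ e1C N) ≤ (1 + β⁻¹ * c * l) * a ^ l)
    (hF2 : ‖((t : ℂ) • F) ^ N‖ ≤ x ^ N) :
    β * cnorm (rM N ((t : ℂ) • F) *ᵥ e1C N) ≤
      (β + c * N) * Real.exp (t * a) * ∑' q : ℕ, x ^ ((q + 1) * N) / ((q + 1) * N)! := by
  set K := 1 + β⁻¹ * c * N
  have hw : ∀ r < N, cnorm (((t : ℂ) • F) ^ r *ᵥ e1C N) ≤ K * (t * a) ^ r := by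
    intro r hr
    have hrN : (r : ℝ) ≤ N := by exact_mod_cast hr.le
    rw [smul_pow, Matrix.smul_mulVec, cnorm_smul, norm_pow, Complex.norm_real,
      Real.norm_of_nonneg ht, mul_pow, mul_left_comm]
    gcongr
    exact (hF1 r (by omega)).trans (by simp only [K]; gcongr)
  have hexp : ∑ r ∈ range N, K * (t * a) ^ r / r ! ≤ K * Real.exp (t * a) := by
    simp_rw [mul_div_assoc, ← mul_sum]
    gcongr
    exact Real.sum_le_exp_of_nonneg (by positivity) N
  have hS : 0 ≤ ∑' q : ℕ, x ^ ((q + 1) * N) / ((q + 1) * N)! := by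
    have hxN : 0 ≤ x ^ N := (norm_nonneg _).trans hF2
    exact tsum_nonneg fun q => by rw [pow_mul']; positivity
  calc β * cnorm (rM N ((t : ℂ) • F) *ᵥ e1C N)
      ≤ β * ((∑' q : ℕ, x ^ ((q + 1) * N) / ((q + 1) * N)!) *
          ∑ r ∈ range N, K * (t * a) ^ r / r !) := by
        gcongr
        exact cnorm_rM_mulVec_le hN _ _ hF2 _ hw
    _ ≤ β * ((∑' q : ℕ, x ^ ((q + 1) * N) / ((q + 1) * N)!) * (K * Real.exp (t * a))) := by
        gcongr
    _ = _ := by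
        simp only [K]
        field_simp

theorem arnoldi_remainder_bound_general (t a c C β : ℝ)
    (ht : 0 < t) (ha : 0 < a) (hc : 0 < c) (hβ : 1 ≤ β)
    (N : ℕ) (hN : 1 ≤ N) (F : Matrix (Fin N) (Fin N) ℂ)
    (hF1 : ∀ l : ℕ, l ≤ N - 1 →
      cnorm ((F ^ l).mulVec (e1C N)) ≤ (1 + β⁻¹ * c * l) * a ^ l)
    (hF2 : ‖((t : ℂ) • F) ^ N‖ ≤ (t * C) ^ N) :
    (β * cnorm ((rM N ((t : ℂ) • F)).mulVec (e1C N)) ≤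
      (β + c * N) * Real.exp (t * a) *
        ∑' k : ℕ, (t * C) ^ ((k + 1) * N) / (Nat.factorial ((k + 1) * N))) ∧
    (∀ Fs : (M : ℕ) → Matrix (Fin M) (Fin M) ℂ,
      (∀ M : ℕ, 1 ≤ M →
        (∀ l : ℕ, l ≤ M - 1 →
          cnorm (((Fs M) ^ l).mulVec (e1C M)) ≤ (1 + β⁻¹ * c * l) * a ^ l) ∧
        ‖((t : ℂ) • Fs M) ^ M‖ ≤ (t * C) ^ M) →
      Filter.Tendsto (fun M : ℕ => β * cnorm ((rM M ((t : ℂ) • Fs M)).mulVec (e1C M)))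
        Filter.atTop (nhds 0)) := by
  have hβ₀ : 0 < β := one_pos.trans_le hβ
  refine ⟨mul_cnorm_rM_smul_mulVec_le ht.le ha.le hc.le hβ₀ (by omega) F hF1 hF2,
    fun Fs hFs => ?_⟩
  have hG := (tendsto_linear_mul_pow_div_factorial β c |t * C|).mul_const
    (Real.exp (t * a) * Real.exp |t * C|)
  rw [zero_mul] at hG
  refine squeeze_zero' (.of_forall fun M => mul_nonneg hβ₀.le (cnorm_nonneg _)) ?_ hG
  filter_upwards [eventually_ge_atTop 1] with M hM
  obtain ⟨hFs1, hFs2⟩ := hFs M hM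
  calc β * cnorm (rM M ((t : ℂ) • Fs M) *ᵥ e1C M)
      ≤ (β + c * M) * Real.exp (t * a) *
          ∑' q : ℕ, (t * C) ^ ((q + 1) * M) / ((q + 1) * M)! :=
        mul_cnorm_rM_smul_mulVec_le ht.le ha.le hc.le hβ₀ (by omega) (Fs M) hFs1 hFs2
    _ ≤ (β + c * M) * Real.exp (t * a) * (|t * C| ^ M / M ! * Real.exp |t * C|) := by
        gcongr
        exact tsum_pow_mul_div_factorial_le _ (by omega)
    _ = _ := by ring

/-- If `‖F^ℓ e₁‖ ≤ (1 + β⁻¹ c ℓ) a^ℓ` for `0 ≤ ℓ ≤ N-1` and `‖(tF)^N‖ ≤ (tC)^N`, then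
`β ‖r_N(t F) e₁‖ ≤ (β + c N) e^{t a} ∑_{k=1}^∞ (tC)^{kN}/(kN)!`; in particular, for a
sequence of such matrices `F_N` with constants independent of `N`,
`β ‖r_N(t F_N) e₁‖ → 0` as `N → ∞`. -/
theorem arnoldi_remainder_bound (t a c C β : ℝ)
    (ht : 0 < t) (ha : 0 < a) (hc : 0 < c) (hC : 0 < C) (hβ : 1 ≤ β)
    (N : ℕ) (hN : 1 ≤ N) (F : Matrix (Fin N) (Fin N) ℂ)
    (hF1 : ∀ l : ℕ, l ≤ N - 1 →
      cnorm ((F ^ l).mulVec (e1C N)) ≤ (1 + β⁻¹ * c * l) * a ^ l)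
    (hF2 : ‖((t : ℂ) • F) ^ N‖ ≤ (t * C) ^ N) :
    (β * cnorm ((rM N ((t : ℂ) • F)).mulVec (e1C N)) ≤
      (β + c * N) * Real.exp (t * a) *
        ∑' k : ℕ, (t * C) ^ ((k + 1) * N) / (Nat.factorial ((k + 1) * N))) ∧
    (∀ Fs : (M : ℕ) → Matrix (Fin M) (Fin M) ℂ,
      (∀ M : ℕ, 1 ≤ M →
        (∀ l : ℕ, l ≤ M - 1 →
          cnorm (((Fs M) ^ l).mulVec (e1C M)) ≤ (1 + β⁻¹ * c * l) * a ^ l) ∧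
        ‖((t : ℂ) • Fs M) ^ M‖ ≤ (t * C) ^ M) →
      Filter.Tendsto (fun M : ℕ => β * cnorm ((rM M ((t : ℂ) • Fs M)).mulVec (e1C M)))
        Filter.atTop (nhds 0)) :=
  arnoldi_remainder_bound_general t a c C β ht ha hc hβ N hN F hF1 hF2
end
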